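/- Under the non-parallelism assumption, the index j is the unique maximizer of i ↦ |[W⁻¹ P e_j]_i|; that is, |[W⁻¹ P e_j]_i| < [W⁻¹ P e_j]_j for all i ≠ j. -/

import Mathlib

open Matrix Finset RealInnerProductSpace

noncomputable def enormFin {n : ℕ} (v : Fin n → ℝ) : ℝ := Real.sqrt (∑ i, v i ^ 2)

noncomputable def wInvP {n : ℕ} (P : Matrix (Fin n) (Fin n) ℝ) (j i : Fin n) : ℝ :=
  P.mulVec (Pi.single j 1) i / enormFin (P.mulVec (Pi.single i 1))

/-!
For an orthogonal projection `P` the Gram matrix of its columns `cₖ = P eₖ` is `P` itself,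
so `[W⁻¹ P e_j]_i = ⟪cᵢ, c_j⟫ / ‖cᵢ‖` and in particular `[W⁻¹ P e_j]_j = ‖c_j‖`.
The claim is therefore the strict Cauchy–Schwarz inequality for the non-parallel pair `cᵢ, c_j`.
-/

theorem abs_real_inner_div_norm_lt_norm {F : Type*} [NormedAddCommGroup F]
    [InnerProductSpace ℝ F] {x y : F} (h : ∀ c : ℝ, y ≠ c • x) :
    |⟪x, y⟫| / ‖x‖ < ‖y‖ := by
  have hy : y ≠ 0 := by simpa using h 0
  rcases eq_or_ne x 0 with rfl | hx
  · simpa using hy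
  rw [div_lt_iff₀ (norm_pos_iff.2 hx), mul_comm]
  refine (abs_real_inner_le_norm x y).lt_of_ne fun heq => ?_
  obtain ⟨r, -, hr⟩ := (norm_inner_eq_norm_iff hx hy).1 (by rwa [Real.norm_eq_abs])
  exact h r hr

theorem inner_toLp_col_col {m ι : Type*} [Fintype m] (A : Matrix m ι ℝ) (p q : ι) :
    ⟪WithLp.toLp 2 (A.col p), WithLp.toLp 2 (A.col q)⟫ = (Aᵀ * A) p q := by
  simp [EuclideanSpace.inner_toLp_toLp, mul_apply, dotProduct, mul_comm]

theorem enormFin_eq_norm {n : ℕ} (v : Fin n → ℝ) : enormFin v = ‖WithLp.toLp 2 v‖ := by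
  simp [enormFin, EuclideanSpace.norm_eq]

theorem wInvP_eq_inner_div_norm {n : ℕ} {P : Matrix (Fin n) (Fin n) ℝ} (hP : Pᵀ * P = P)
    (j i : Fin n) :
    wInvP P j i = ⟪WithLp.toLp 2 (P.col i), WithLp.toLp 2 (P.col j)⟫ / ‖WithLp.toLp 2 (P.col i)‖ := by
  rw [wInvP, inner_toLp_col_col, hP, mulVec_single_one, mulVec_single_one, enormFin_eq_norm]
  rfl

theorem wInvP_strict_max_general {n : ℕ}
    (P : Matrix (Fin n) (Fin n) ℝ) (hsymm : Pᵀ = P) (hidem : P * P = P)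
    (j : Fin n)
    (hpar : ∀ i : Fin n, i ≠ j → ∀ c : ℝ,
      P.mulVec (Pi.single j 1) ≠ c • P.mulVec (Pi.single i 1)) :
    ∀ i : Fin n, i ≠ j → |wInvP P j i| < wInvP P j j := by
  intro i hij
  have hP : Pᵀ * P = P := by rw [hsymm, hidem]
  have hcol : ∀ c : ℝ, WithLp.toLp 2 (P.col j) ≠ c • WithLp.toLp 2 (P.col i) :=
    fun c h => hpar i hij c <| by
      rw [mulVec_single_one, mulVec_single_one]
      exact WithLp.toLp_injective 2 h
  rw [wInvP_eq_inner_div_norm hP, wInvP_eq_inner_div_norm hP, real_inner_self_eq_norm_mul_norm,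
    mul_self_div_self, abs_div, abs_norm]
  exact abs_real_inner_div_norm_lt_norm hcol

/-- Under the non-parallelism assumption, `j` is the unique maximizer of
`i ↦ |[W⁻¹ P e_j]_i|`; that is, `|[W⁻¹ P e_j]_i| < [W⁻¹ P e_j]_j` for all `i ≠ j`. -/
theorem wInvP_strict_max {n : ℕ}
    (P : Matrix (Fin n) (Fin n) ℝ) (hsymm : Pᵀ = P) (hidem : P * P = P)
    (hnz : ∀ i : Fin n, P.mulVec (Pi.single i 1) ≠ 0)
    (j : Fin n)
    (hpar : ∀ i : Fin n, i ≠ j → ∀ c : ℝ,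
      P.mulVec (Pi.single j 1) ≠ c • P.mulVec (Pi.single i 1)) :
    ∀ i : Fin n, i ≠ j → |wInvP P j i| < wInvP P j j :=
  wInvP_strict_max_general P hsymm hidem j hpar
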